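/- Let T = {γ ∈ ℝ^n : γ_i < 0 for all i, Σ_{i=1}^n γ_i > −1} and f(γ) = ½ Σ_{i=1}^n γ_i log(−γ_i) − ½ (1 + Σ_{j=1}^n γ_j) log(1 + Σ_{j=1}^n γ_j). Then for every s ∈ ∂T = closure(T) \ T there exist δ > 0 and a constant c < 1 such that for all γ ∈ T with ‖γ − s‖ < δ one has ⟨s − γ, ∇f(γ)⟩ ≤ c · ‖s − γ‖ · ‖∇f(γ)‖. (Near any boundary point, the gradient ∇f never points in the direction from γ to s.) -/

import Mathlib

/-! Write `x_i = -γ_i` and `A = 1 + ∑ γ_j`; on the cell these `n + 1` numbers are positive and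
sum to `1`, `2 f` is their entropy `∑ negMulLog`, and `2 ∂_i f = log x_i - log A`. Hence
`2 ⟪s - γ, ∇f γ⟫ = ∑ (x - y) log x`, summed over the `n + 1` pairs `(x, y)` of corresponding
coordinates of `γ` and `s`. Near `y ≥ 0` each term is at most `C |x - y|`: for `y > 0` because
`log` is bounded near `y`, for `y = 0` because `x log x ≤ 0`. So `⟪s - γ, ∇f γ⟫ ≤ K ‖s - γ‖`.
At a boundary point, on the other hand, some `y` vanishes while another does not (`x_k → 0`
while `A → 1 + ∑ s_j > 0`, or `A → 0` while `x_k → -s_k > 0`), so `|∂_k f| → ∞`; once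
`‖∇f γ‖ ≥ 2 K` the inequality holds with `c = 1 / 2`. -/

open scoped BigOperators RealInnerProductSpace

/-- The open cell `T = {γ ∈ ℝⁿ : γᵢ < 0, ∑ γᵢ > −1}`, inside Euclidean space. -/
def openCellT (n : ℕ) : Set (EuclideanSpace ℝ (Fin n)) :=
  {γ | (∀ i, γ i < 0) ∧ -1 < ∑ i, γ i}

/-- The potential `f` of the T-dual Lagrangian `L(O(−1), h_{−1})`. -/
noncomputable def potentialF (n : ℕ) (γ : EuclideanSpace ℝ (Fin n)) : ℝ :=
  (1 / 2) * ∑ i, γ i * Real.log (-γ i)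
    - (1 / 2) * (1 + ∑ j, γ j) * Real.log (1 + ∑ j, γ j)

open Real Filter Topology

lemma exists_sub_mul_log_le {y : ℝ} (hy : 0 ≤ y) :
    ∃ C, 0 ≤ C ∧ ∀ᶠ x in 𝓝[Set.Ioi 0] y, (x - y) * log x ≤ C * |x - y| := by
  rcases hy.eq_or_lt with rfl | hy
  · refine ⟨0, le_rfl, ?_⟩
    filter_upwards [Ioo_mem_nhdsGT zero_lt_one] with x hx
    simpa using mul_log_nonpos hx.1.le hx.2.le
  · refine ⟨|log y| + 1, by positivity, ?_⟩
    have hlog : ∀ᶠ x in 𝓝 y, |log x| < |log y| + 1 :=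
      ((continuousAt_log hy.ne').abs.eventually_lt continuousAt_const (lt_add_one _))
    filter_upwards [nhdsWithin_le_nhds hlog] with x hx
    calc (x - y) * log x ≤ |x - y| * |log x| := by rw [← abs_mul]; exact le_abs_self _
      _ ≤ |x - y| * (|log y| + 1) := by gcongr
      _ = (|log y| + 1) * |x - y| := mul_comm _ _

lemma tendsto_abs_log_sub_log_atTop {α : Type*} {l : Filter α} {u v : α → ℝ}
    (hu : Tendsto u l (𝓝[>] 0)) {b : ℝ} (hb : 0 < b) (hv : Tendsto v l (𝓝 b)) :
    Tendsto (fun t => |log (u t) - log (v t)|) l atTop := by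
  have hlogv : Tendsto (fun t => -log (v t)) l (𝓝 (-log b)) :=
    ((continuousAt_log hb.ne').tendsto.comp hv).neg
  exact tendsto_abs_atBot_atTop.comp ((tendsto_log_nhdsGT_zero.comp hu).atBot_add hlogv)

section

variable {ι : Type*} [Fintype ι]

lemma abs_apply_sub_le_norm (x y : EuclideanSpace ℝ ι) (i : ι) : |x i - y i| ≤ ‖x - y‖ :=
  PiLp.norm_apply_le (x - y) i

lemma abs_sum_sub_sum_le (x y : EuclideanSpace ℝ ι) :
    |∑ i, x i - ∑ i, y i| ≤ Fintype.card ι * ‖x - y‖ := by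
  rw [← Finset.sum_sub_distrib]
  calc |∑ i, (x i - y i)| ≤ ∑ i, |x i - y i| := Finset.abs_sum_le_sum_abs _ _
    _ ≤ ∑ _i : ι, ‖x - y‖ := Finset.sum_le_sum fun i _ => abs_apply_sub_le_norm x y i
    _ = Fintype.card ι * ‖x - y‖ := by simp

end

noncomputable def gradPotentialF (n : ℕ) (γ : EuclideanSpace ℝ (Fin n)) :
    EuclideanSpace ℝ (Fin n) :=
  WithLp.toLp 2 fun i => (log (-γ i) - log (1 + ∑ j, γ j)) / 2

section

variable {n : ℕ}

lemma potentialF_eq_negMulLog (γ : EuclideanSpace ℝ (Fin n)) :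
    potentialF n γ = (∑ i, negMulLog (-γ i) + negMulLog (1 + ∑ j, γ j)) / 2 := by
  simp only [potentialF, negMulLog, neg_mul, neg_neg]
  ring

lemma hasGradientAt_potentialF {γ : EuclideanSpace ℝ (Fin n)} (hγ : γ ∈ openCellT n) :
    HasGradientAt (potentialF n) (gradPotentialF n γ) γ := by
  obtain ⟨hneg, hsum⟩ := hγ
  let proj (i : Fin n) : EuclideanSpace ℝ (Fin n) →L[ℝ] ℝ := EuclideanSpace.proj i
  have hcoord (i : Fin n) : HasFDerivAt (fun x : EuclideanSpace ℝ (Fin n) => negMulLog (-x i))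
      ((-log (-γ i) - 1) • -proj i) γ := by
    have hx : HasFDerivAt (fun x : EuclideanSpace ℝ (Fin n) => -x i) (-proj i) γ :=
      (proj i).hasFDerivAt.neg
    exact (hasDerivAt_negMulLog (neg_pos.2 (hneg i)).ne').comp_hasFDerivAt γ hx
  have htotal : HasFDerivAt (fun x : EuclideanSpace ℝ (Fin n) => negMulLog (1 + ∑ j, x j))
      ((-log (1 + ∑ j, γ j) - 1) • ∑ j, proj j) γ :=
    (hasDerivAt_negMulLog (by linarith)).comp_hasFDerivAt γ
      ((HasFDerivAt.fun_sum fun j _ => (proj j).hasFDerivAt).const_add 1)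
  have hF := ((HasFDerivAt.fun_sum (u := Finset.univ) fun i _ => hcoord i).add htotal).mul_const
    (1 / 2 : ℝ)
  rw [hasGradientAt_iff_hasFDerivAt]
  refine (hF.congr_of_eventuallyEq (Eventually.of_forall fun x => ?_)).congr_fderiv ?_
  · simp only [potentialF_eq_negMulLog, Pi.add_apply]
    ring
  · ext v
    simp only [proj, gradPotentialF, smul_add, smul_neg, add_apply, neg_apply, smul_apply,
      sum_apply, PiLp.proj_apply, smul_eq_mul, InnerProductSpace.toDual_apply_apply,
      PiLp.inner_apply, RCLike.inner_apply, conj_trivial, Finset.mul_sum]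
    rw [← Finset.sum_add_distrib]
    exact Finset.sum_congr rfl fun i _ => by ring

lemma inner_sub_gradPotentialF (s γ : EuclideanSpace ℝ (Fin n)) :
    ⟪s - γ, gradPotentialF n γ⟫ =
      (∑ i, (-γ i - -s i) * log (-γ i)
        + ((1 + ∑ j, γ j) - (1 + ∑ j, s j)) * log (1 + ∑ j, γ j)) / 2 := by
  simp only [gradPotentialF, PiLp.inner_apply, RCLike.inner_apply, conj_trivial,
    PiLp.sub_apply]
  rw [add_sub_add_left_eq_sub, ← Finset.sum_sub_distrib, Finset.sum_mul, ← Finset.sum_add_distrib,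
    Finset.sum_div]
  exact Finset.sum_congr rfl fun i _ => by ring

lemma closure_openCellT_subset :
    closure (openCellT n) ⊆ {γ | (∀ i, γ i ≤ 0) ∧ -1 ≤ ∑ i, γ i} := by
  intro s hs
  have hcont (i : Fin n) : Continuous fun γ : EuclideanSpace ℝ (Fin n) => γ i := by fun_prop
  refine ⟨fun i => ?_, ?_⟩
  · exact closure_lt_subset_le (hcont i) continuous_const
      (closure_mono (fun γ hγ => hγ.1 i) hs)
  · exact closure_lt_subset_le continuous_const (continuous_finsetSum _ fun i _ => hcont i)
      (closure_mono (fun γ hγ => hγ.2) hs)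

lemma tendsto_neg_apply_nhdsWithin_openCellT (s : EuclideanSpace ℝ (Fin n)) (i : Fin n) :
    Tendsto (fun γ => -γ i) (𝓝[openCellT n] s) (𝓝[Set.Ioi 0] (-s i)) := by
  refine tendsto_nhdsWithin_iff.2 ⟨?_, ?_⟩
  · exact ((show Continuous fun γ : EuclideanSpace ℝ (Fin n) => -γ i by fun_prop).tendsto
      s).mono_left nhdsWithin_le_nhds
  · filter_upwards [self_mem_nhdsWithin] with γ hγ
    exact neg_pos.2 (hγ.1 i)

lemma tendsto_one_add_sum_nhdsWithin_openCellT (s : EuclideanSpace ℝ (Fin n)) :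
    Tendsto (fun γ => 1 + ∑ j, γ j) (𝓝[openCellT n] s) (𝓝[Set.Ioi 0] (1 + ∑ j, s j)) := by
  refine tendsto_nhdsWithin_iff.2 ⟨?_, ?_⟩
  · exact ((show Continuous fun γ : EuclideanSpace ℝ (Fin n) => 1 + ∑ j, γ j by fun_prop).tendsto
      s).mono_left nhdsWithin_le_nhds
  · filter_upwards [self_mem_nhdsWithin] with γ hγ
    show 0 < 1 + ∑ j, γ j
    linarith [hγ.2]

lemma exists_inner_sub_gradPotentialF_le {s : EuclideanSpace ℝ (Fin n)}
    (hs : s ∈ closure (openCellT n)) :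
    ∃ K, ∀ᶠ γ in 𝓝[openCellT n] s, ⟪s - γ, gradPotentialF n γ⟫ ≤ K * ‖s - γ‖ := by
  obtain ⟨hle, hsum⟩ := closure_openCellT_subset hs
  choose C hC0 hC using fun i => exists_sub_mul_log_le (neg_nonneg.2 (hle i))
  obtain ⟨D, hD0, hD⟩ := exists_sub_mul_log_le (show 0 ≤ 1 + ∑ j, s j by linarith)
  refine ⟨(∑ i, C i + n * D) / 2, ?_⟩
  have hcoord : ∀ᶠ γ in 𝓝[openCellT n] s, ∀ i,
      (-γ i - -s i) * log (-γ i) ≤ C i * |-γ i - -s i| :=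
    eventually_all.2 fun i => tendsto_neg_apply_nhdsWithin_openCellT s i (hC i)
  filter_upwards [hcoord, tendsto_one_add_sum_nhdsWithin_openCellT s hD] with γ hγ hγD
  have h1 : ∑ i, (-γ i - -s i) * log (-γ i) ≤ (∑ i, C i) * ‖s - γ‖ := by
    rw [Finset.sum_mul]
    refine Finset.sum_le_sum fun i _ => (hγ i).trans (mul_le_mul_of_nonneg_left ?_ (hC0 i))
    rw [neg_sub_neg]
    exact abs_apply_sub_le_norm s γ i
  have h2 : ((1 + ∑ j, γ j) - (1 + ∑ j, s j)) * log (1 + ∑ j, γ j) ≤ D * (n * ‖s - γ‖) := by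
    refine hγD.trans (mul_le_mul_of_nonneg_left ?_ hD0)
    rw [add_sub_add_left_eq_sub, norm_sub_rev]
    simpa using abs_sum_sub_sum_le γ s
  rw [inner_sub_gradPotentialF]
  linarith

lemma tendsto_norm_gradPotentialF_atTop {s : EuclideanSpace ℝ (Fin n)}
    (hs : s ∈ closure (openCellT n) \ openCellT n) :
    Tendsto (fun γ => ‖gradPotentialF n γ‖) (𝓝[openCellT n] s) atTop := by
  obtain ⟨hle, hsum⟩ := closure_openCellT_subset hs.1
  obtain ⟨k, hk⟩ : ∃ k, (s k = 0 ∧ 0 < 1 + ∑ j, s j) ∨ (s k < 0 ∧ 1 + ∑ j, s j = 0) := by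
    by_cases ha : 1 + ∑ j, s j = 0
    · obtain ⟨k, -, hk⟩ := Finset.exists_ne_zero_of_sum_ne_zero (by linarith : ∑ j, s j ≠ 0)
      exact ⟨k, .inr ⟨(hle k).lt_of_ne hk, ha⟩⟩
    · have hpos : 0 < 1 + ∑ j, s j := lt_of_le_of_ne (by linarith) (Ne.symm ha)
      obtain ⟨k, hk⟩ : ∃ k, s k = 0 := by
        by_contra! h
        exact hs.2 ⟨fun i => (hle i).lt_of_ne (h i), by linarith⟩
      exact ⟨k, .inl ⟨hk, hpos⟩⟩
  have hnorm (γ : EuclideanSpace ℝ (Fin n)) :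
      |log (-γ k) - log (1 + ∑ j, γ j)| / 2 ≤ ‖gradPotentialF n γ‖ := by
    simpa [gradPotentialF, abs_div] using PiLp.norm_apply_le (gradPotentialF n γ) k
  refine tendsto_atTop_mono hnorm (Tendsto.atTop_div_const two_pos ?_)
  rcases hk with ⟨hk, ha⟩ | ⟨hk, ha⟩
  · have hu := tendsto_neg_apply_nhdsWithin_openCellT s k
    rw [hk, neg_zero] at hu
    exact tendsto_abs_log_sub_log_atTop hu ha
      ((tendsto_one_add_sum_nhdsWithin_openCellT s).mono_right nhdsWithin_le_nhds)
  · have hu := tendsto_one_add_sum_nhdsWithin_openCellT s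
    rw [ha] at hu
    simp_rw [abs_sub_comm (log (-_))]
    exact tendsto_abs_log_sub_log_atTop hu (neg_pos.2 hk)
      ((tendsto_neg_apply_nhdsWithin_openCellT s k).mono_right nhdsWithin_le_nhds)

end

theorem stmt_9_general (n : ℕ) :
    ∀ s ∈ closure (openCellT n) \ openCellT n,
      ∃ δ : ℝ, 0 < δ ∧ ∃ c : ℝ, c < 1 ∧
        ∀ γ ∈ openCellT n, ‖γ - s‖ < δ →
          ⟪s - γ, gradient (potentialF n) γ⟫ ≤
            c * ‖s - γ‖ * ‖gradient (potentialF n) γ‖ := by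
  intro s hs
  obtain ⟨K, hK⟩ := exists_inner_sub_gradPotentialF_le hs.1
  have hnear : ∀ᶠ γ in 𝓝[openCellT n] s,
      ⟪s - γ, gradient (potentialF n) γ⟫ ≤ 1 / 2 * ‖s - γ‖ * ‖gradient (potentialF n) γ‖ := by
    filter_upwards [self_mem_nhdsWithin, hK,
      (tendsto_norm_gradPotentialF_atTop hs).eventually_ge_atTop (2 * K)] with γ hγ hinner hlarge
    rw [(hasGradientAt_potentialF hγ).gradient]
    nlinarith [norm_nonneg (s - γ)]
  obtain ⟨δ, hδ, hball⟩ := Metric.mem_nhdsWithin_iff.1 hnear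
  refine ⟨δ, hδ, 1 / 2, by norm_num, fun γ hγ hγs => hball ⟨?_, hγ⟩⟩
  rwa [Metric.mem_ball, dist_eq_norm]

theorem stmt_9 (n : ℕ) (hn : 1 ≤ n) :
    ∀ s ∈ closure (openCellT n) \ openCellT n,
      ∃ δ : ℝ, 0 < δ ∧ ∃ c : ℝ, c < 1 ∧
        ∀ γ ∈ openCellT n, ‖γ - s‖ < δ →
          ⟪s - γ, gradient (potentialF n) γ⟫ ≤
            c * ‖s - γ‖ * ‖gradient (potentialF n) γ‖ :=
  stmt_9_general n
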